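/- arXiv:1910.06009 — 4 statements merged into one kernel-verified Lean document; each statement's English description precedes it below -/
import Mathlib

section
/- Let Ξ ⊆ ℝ^d be open with nonempty boundary, and let x, y ∈ Ξ with |x − y| ≤ (1/(10√d)) · min(dist(x, ∂Ξ), dist(y, ∂Ξ)). Then there exists an intersecting chain of Whitney cubes of Ξ of length at most 4 connecting x and y, i.e., cubes Q₁,…,Q_m ∈ 𝒲(∂Ξ^c complement) with m ≤ 4, x ∈ Q₁, y ∈ Q_m, and Q_j ∩ Q_{j+1} ≠ ∅ for all j. -/
open Set Metric MeasureTheory ENNReal NNReal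

noncomputable section

abbrev Euc (d : ℕ) := EuclideanSpace ℝ (Fin d)

/-- The (extended) distance between two sets, `⊤` if one of them behaves emptily. -/
noncomputable def setEDist {α : Type*} [PseudoEMetricSpace α] (A B : Set α) : ℝ≥0∞ :=
  ⨅ a ∈ A, EMetric.infEdist a B

/-- The distance between two sets, as a real number. -/
noncomputable def setDist {α : Type*} [PseudoEMetricSpace α] (A B : Set α) : ℝ :=
  (setEDist A B).toReal

/-- The closed axis-parallel cube with center `c` and half side length `r`. -/
def cube (d : ℕ) (c : Euc d) (r : ℝ) : Set (Euc d) :=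
  {x : Euc d | ∀ i, |x i - c i| ≤ r}

/-- A closed axis-parallel (nondegenerate) cube in `ℝ^d`. -/
def IsClosedCube {d : ℕ} (Q : Set (Euc d)) : Prop :=
  ∃ (c : Euc d) (r : ℝ), 0 < r ∧ Q = cube d c r

/-- A dyadic cube: a cube of the mesh determined by the lattice `2^(-k) ℤ^d`. -/
def IsDyadicCube {d : ℕ} (Q : Set (Euc d)) : Prop :=
  ∃ (k : ℤ) (m : Fin d → ℤ),
    Q = {x : Euc d | ∀ i, (m i : ℝ) * 2 ^ (-k) ≤ x i ∧ x i ≤ ((m i : ℝ) + 1) * 2 ^ (-k)}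

/-- `𝒲` is a Whitney decomposition of the open set `Ξ`: a collection of dyadic cubes with
pairwise disjoint interiors covering `Ξ`, such that `diam Q ≤ dist(Q, Ξᶜ) ≤ 4 diam Q`,
and intersecting cubes have comparable diameters. -/
def IsWhitneyDecomp {d : ℕ} (Ξ : Set (Euc d)) (𝒲 : Set (Set (Euc d))) : Prop :=
  (∀ Q ∈ 𝒲, IsDyadicCube Q) ∧
  (⋃₀ 𝒲 = Ξ) ∧
  (𝒲.Pairwise fun Q Q' => interior Q ∩ interior Q' = ∅) ∧
  (∀ Q ∈ 𝒲, Metric.diam Q ≤ setDist Q Ξᶜ ∧ setDist Q Ξᶜ ≤ 4 * Metric.diam Q) ∧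
  (∀ Q ∈ 𝒲, ∀ Q' ∈ 𝒲, (Q ∩ Q').Nonempty → Metric.diam Q ≤ 4 * Metric.diam Q')

/-!
A Whitney cube `Q ∋ x` of side `2^{-k}` satisfies
`dist(x, ∂Ξ) ≤ dist(x, Ξᶜ) ≤ dist(Q, Ξᶜ) + diam Q ≤ 5 diam Q ≤ 5 √d 2^{-k}`,
so the hypothesis makes `|x - y| ≤ 2^{-k}/2` smaller than the sides of both Whitney cubes
containing `x` and `y`. Two dyadic cubes containing points closer than both of their sides
intersect, because their faces lie on the grid of the smaller one; so two cubes suffice.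
-/

lemma infDist_frontier_le_infDist_compl {E : Type*} [NormedAddCommGroup E] [NormedSpace ℝ E]
    [FiniteDimensional ℝ E] {s : Set E} {x : E} (hx : x ∈ s) :
    infDist x (frontier s) ≤ infDist x sᶜ := by
  rcases eq_or_ne s univ with rfl | hs
  · simp
  obtain ⟨y, hy, hxy⟩ := exists_mem_frontier_infDist_compl_eq_dist hx hs
  exact hxy ▸ infDist_le_dist_of_mem hy

lemma infDist_le_setDist_add_diam {α : Type*} [PseudoMetricSpace α] {Q S : Set α} {p : α}
    (hp : p ∈ Q) (hQ : Bornology.IsBounded Q) : infDist p S ≤ setDist Q S + diam Q := by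
  rcases S.eq_empty_or_nonempty with rfl | hS
  · rw [infDist_empty]
    exact add_nonneg ENNReal.toReal_nonneg diam_nonneg
  have hle : infEDist p S ≤ setEDist Q S + ediam Q := by
    rw [← tsub_le_iff_right, setEDist]
    refine le_iInf₂ fun a ha => tsub_le_iff_right.2 ?_
    exact infEDist_le_infEDist_add_edist.trans (add_le_add le_rfl (edist_le_ediam_of_mem hp ha))
  have hfin : setEDist Q S ≠ ⊤ := ne_top_of_le_ne_top (infEDist_ne_top hS) (iInf₂_le p hp)
  calc infDist p S ≤ (setEDist Q S + ediam Q).toReal :=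
        ENNReal.toReal_mono (ENNReal.add_ne_top.2 ⟨hfin, hQ.ediam_ne_top⟩) hle
    _ = setDist Q S + diam Q := ENNReal.toReal_add hfin hQ.ediam_ne_top

lemma EuclideanSpace.dist_le_sqrt_card_mul {ι : Type*} [Fintype ι]
    {p q : EuclideanSpace ℝ ι} {c : ℝ} (hc : 0 ≤ c) (h : ∀ i, |p i - q i| ≤ c) :
    dist p q ≤ √(Fintype.card ι) * c := by
  have hsum : ∑ i, dist (p i) (q i) ^ 2 ≤ Fintype.card ι * c ^ 2 := by
    calc ∑ i, dist (p i) (q i) ^ 2 ≤ ∑ _i : ι, c ^ 2 :=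
          Finset.sum_le_sum fun i _ => pow_le_pow_left₀ dist_nonneg (h i) 2
      _ = Fintype.card ι * c ^ 2 := by simp
  calc dist p q = √(∑ i, dist (p i) (q i) ^ 2) := EuclideanSpace.dist_eq p q
    _ ≤ √(Fintype.card ι * c ^ 2) := Real.sqrt_le_sqrt hsum
    _ = √(Fintype.card ι) * c := by rw [Real.sqrt_mul (Nat.cast_nonneg _), Real.sqrt_sq hc]

section Cubes

variable {d : ℕ}

def dyadicCube (k : ℤ) (m : Fin d → ℤ) : Set (Euc d) :=
  {x : Euc d | ∀ i, x i ∈ Icc ((m i : ℝ) * 2 ^ (-k)) (((m i : ℝ) + 1) * 2 ^ (-k))}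

lemma isDyadicCube_iff {Q : Set (Euc d)} :
    IsDyadicCube Q ↔ ∃ (k : ℤ) (m : Fin d → ℤ), Q = dyadicCube k m :=
  Iff.rfl

lemma dist_le_of_mem_dyadicCube {k : ℤ} {m : Fin d → ℤ} {p q : Euc d}
    (hp : p ∈ dyadicCube k m) (hq : q ∈ dyadicCube k m) : dist p q ≤ √d * 2 ^ (-k) := by
  have hcoord (i : Fin d) : |p i - q i| ≤ 2 ^ (-k) :=
    abs_sub_le_iff.2 ⟨by linarith [(hp i).2, (hq i).1], by linarith [(hp i).1, (hq i).2]⟩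
  simpa only [Fintype.card_fin] using
    EuclideanSpace.dist_le_sqrt_card_mul (zpow_nonneg zero_le_two _) hcoord

lemma isBounded_dyadicCube (k : ℤ) (m : Fin d → ℤ) :
    Bornology.IsBounded (dyadicCube k m) :=
  isBounded_iff.2 ⟨_, fun _ hp _ hq => dist_le_of_mem_dyadicCube hp hq⟩

lemma diam_dyadicCube_le (k : ℤ) (m : Fin d → ℤ) :
    diam (dyadicCube (d := d) k m) ≤ √d * 2 ^ (-k) :=
  diam_le_of_forall_dist_le (by positivity) fun _ hp _ hq => dist_le_of_mem_dyadicCube hp hq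

/-- Distinct points of the lattice `δ ℤ` are at least `δ` apart. -/
lemma le_of_mem_zmultiples_of_abs_sub_lt {δ a b u v : ℝ}
    (ha : a ∈ AddSubgroup.zmultiples δ) (hb : b ∈ AddSubgroup.zmultiples δ)
    (hua : u ≤ a) (hbv : b ≤ v) (huv : |u - v| < δ) : b ≤ a := by
  obtain ⟨i, rfl⟩ := AddSubgroup.mem_zmultiples_iff.1 ha
  obtain ⟨j, rfl⟩ := AddSubgroup.mem_zmultiples_iff.1 hb
  by_contra! hab
  simp only [zsmul_eq_mul] at hua hbv hab
  have hδ : 0 < δ := (abs_nonneg _).trans_lt huv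
  have hij : i + 1 ≤ j := by exact_mod_cast (mul_lt_mul_iff_left₀ hδ).1 hab
  have : (i + 1 : ℝ) * δ ≤ j * δ := by gcongr; exact_mod_cast hij
  linarith [(abs_lt.1 huv).1]

lemma int_mul_zpow_two_mem_zmultiples {k K : ℤ} (hk : k ≤ K) (n : ℤ) :
    (n : ℝ) * 2 ^ (-k) ∈ AddSubgroup.zmultiples ((2 : ℝ) ^ (-K)) := by
  lift K - k to ℕ using sub_nonneg.2 hk with e he
  refine AddSubgroup.mem_zmultiples_iff.2 ⟨n * 2 ^ e, ?_⟩
  rw [zsmul_eq_mul, show -k = e + -K by omega, zpow_add₀ two_ne_zero, zpow_natCast]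
  push_cast
  ring

/-- All four endpoints lie on the grid of the smaller interval. -/
lemma dyadicInterval_inter_nonempty {k₁ k₂ n₁ n₂ : ℤ} {u v : ℝ}
    (hu : u ∈ Icc ((n₁ : ℝ) * 2 ^ (-k₁)) ((n₁ + 1) * 2 ^ (-k₁)))
    (hv : v ∈ Icc ((n₂ : ℝ) * 2 ^ (-k₂)) ((n₂ + 1) * 2 ^ (-k₂)))
    (h₁ : |u - v| < 2 ^ (-k₁)) (h₂ : |u - v| < 2 ^ (-k₂)) :
    (Icc ((n₁ : ℝ) * 2 ^ (-k₁)) ((n₁ + 1) * 2 ^ (-k₁)) ∩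
      Icc ((n₂ : ℝ) * 2 ^ (-k₂)) ((n₂ + 1) * 2 ^ (-k₂))).Nonempty := by
  wlog hk : k₁ ≤ k₂ generalizing k₁ k₂ n₁ n₂ u v
  · rw [inter_comm]
    exact this hv hu (abs_sub_comm u v ▸ h₂) (abs_sub_comm u v ▸ h₁) (le_of_not_ge hk)
  have hmem₁ (n : ℤ) := int_mul_zpow_two_mem_zmultiples hk n
  have hmem₂ (n : ℤ) := int_mul_zpow_two_mem_zmultiples (le_refl k₂) n
  have hend₁ := hmem₁ (n₁ + 1)
  have hend₂ := hmem₂ (n₂ + 1)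
  push_cast at hend₁ hend₂
  have hle₁ := le_of_mem_zmultiples_of_abs_sub_lt hend₁ (hmem₂ n₂) hu.2 hv.1 h₂
  have hle₂ := le_of_mem_zmultiples_of_abs_sub_lt hend₂ (hmem₁ n₁) hv.2 hu.1
    (abs_sub_comm u v ▸ h₂)
  rw [Icc_inter_Icc, nonempty_Icc]
  exact max_le (le_min (hu.1.trans hu.2) hle₂) (le_min hle₁ (hv.1.trans hv.2))

lemma dyadicCube_inter_nonempty {k₁ k₂ : ℤ} {m₁ m₂ : Fin d → ℤ} {p q : Euc d}
    (hp : p ∈ dyadicCube k₁ m₁) (hq : q ∈ dyadicCube k₂ m₂)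
    (h₁ : dist p q < 2 ^ (-k₁)) (h₂ : dist p q < 2 ^ (-k₂)) :
    (dyadicCube k₁ m₁ ∩ dyadicCube k₂ m₂).Nonempty := by
  have hcoord (i : Fin d) : |p i - q i| ≤ dist p q := by
    simpa only [Real.dist_eq] using PiLp.dist_apply_le p q i
  choose z hz using fun i => dyadicInterval_inter_nonempty (hp i) (hq i)
    ((hcoord i).trans_lt h₁) ((hcoord i).trans_lt h₂)
  exact ⟨WithLp.toLp 2 z, fun i => (hz i).1, fun i => (hz i).2⟩

variable {Ξ : Set (Euc d)} {𝒲 : Set (Set (Euc d))} {k : ℤ} {m : Fin d → ℤ} {x y : Euc d}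

lemma infDist_frontier_le_of_mem_whitneyCube (hW : IsWhitneyDecomp Ξ 𝒲)
    (hQ : dyadicCube k m ∈ 𝒲) (hx : x ∈ dyadicCube k m) :
    infDist x (frontier Ξ) ≤ 5 * √d * 2 ^ (-k) := by
  have hxΞ : x ∈ Ξ := hW.2.1 ▸ mem_sUnion_of_mem hx hQ
  calc infDist x (frontier Ξ) ≤ infDist x Ξᶜ := infDist_frontier_le_infDist_compl hxΞ
    _ ≤ setDist (dyadicCube k m) Ξᶜ + diam (dyadicCube k m) :=
        infDist_le_setDist_add_diam hx (isBounded_dyadicCube k m)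
    _ ≤ 5 * diam (dyadicCube k m) := by linarith [(hW.2.2.2.1 _ hQ).2]
    _ ≤ 5 * √d * 2 ^ (-k) := by linarith [diam_dyadicCube_le (d := d) k m]

lemma dist_lt_zpow_of_mem_whitneyCube (hW : IsWhitneyDecomp Ξ 𝒲)
    (hQ : dyadicCube k m ∈ 𝒲) (hx : x ∈ dyadicCube k m)
    (hxy : dist x y ≤ 1 / (10 * √d) * infDist x (frontier Ξ)) : dist x y < 2 ^ (-k) := by
  have hside : (0 : ℝ) < 2 ^ (-k) := by positivity
  -- For `d = 0` the coefficient `1 / (10 * √0)` is `0`, so `hxy` forces `x = y`.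
  rcases (Real.sqrt_nonneg d).eq_or_lt with hd | hd
  · rw [← hd, mul_zero, _root_.div_zero, zero_mul] at hxy
    exact hxy.trans_lt hside
  calc dist x y ≤ 1 / (10 * √d) * (5 * √d * 2 ^ (-k)) := hxy.trans (by
        gcongr; exact infDist_frontier_le_of_mem_whitneyCube hW hQ hx)
    _ = 2 ^ (-k) / 2 := by field_simp; ring
    _ < 2 ^ (-k) := half_lt_self hside

end Cubes

theorem exists_short_intersecting_chain_general {d : ℕ} (Ξ : Set (Euc d))
    (𝒲 : Set (Set (Euc d))) (hW : IsWhitneyDecomp Ξ 𝒲)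
    (x y : Euc d) (hx : x ∈ Ξ) (hy : y ∈ Ξ)
    (hxy : dist x y ≤ (1 / (10 * Real.sqrt d)) *
      min (infDist x (frontier Ξ)) (infDist y (frontier Ξ))) :
    ∃ m : ℕ, 1 ≤ m ∧ m ≤ 4 ∧ ∃ Q : ℕ → Set (Euc d),
      (∀ i < m, Q i ∈ 𝒲) ∧ x ∈ Q 0 ∧ y ∈ Q (m - 1) ∧
      ∀ i, i + 1 < m → (Q i ∩ Q (i + 1)).Nonempty := by
  obtain ⟨Qx, hQx, hxQx⟩ : x ∈ ⋃₀ 𝒲 := hW.2.1 ▸ hx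
  obtain ⟨Qy, hQy, hyQy⟩ : y ∈ ⋃₀ 𝒲 := hW.2.1 ▸ hy
  obtain ⟨k₁, m₁, rfl⟩ := isDyadicCube_iff.1 (hW.1 Qx hQx)
  obtain ⟨k₂, m₂, rfl⟩ := isDyadicCube_iff.1 (hW.1 Qy hQy)
  have hcoef : (0 : ℝ) ≤ 1 / (10 * √d) := by positivity
  have hx₁ : dist x y < 2 ^ (-k₁) := dist_lt_zpow_of_mem_whitneyCube hW hQx hxQx
    (hxy.trans (mul_le_mul_of_nonneg_left (min_le_left _ _) hcoef))
  have hy₂ : dist x y < 2 ^ (-k₂) := dist_comm x y ▸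
    dist_lt_zpow_of_mem_whitneyCube hW hQy hyQy
      (dist_comm x y ▸ hxy.trans (mul_le_mul_of_nonneg_left (min_le_right _ _) hcoef))
  refine ⟨2, one_le_two, by norm_num,
    fun i => if i = 0 then dyadicCube k₁ m₁ else dyadicCube k₂ m₂, ?_, hxQx, hyQy, ?_⟩
  · intro i _
    dsimp only
    split_ifs <;> assumption
  · intro i hi
    obtain rfl : i = 0 := by omega
    exact dyadicCube_inter_nonempty hxQx hyQy hx₁ hy₂

/-- If `x, y ∈ Ξ` with `|x − y| ≤ (1/(10√d)) min(dist(x, ∂Ξ), dist(y, ∂Ξ))`, then `x` and `y`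
can be connected by an intersecting chain of at most `4` Whitney cubes of `Ξ`. -/
theorem exists_short_intersecting_chain {d : ℕ} (hd : 0 < d) (Ξ : Set (Euc d))
    (hΞ : IsOpen Ξ) (hbd : (frontier Ξ).Nonempty)
    (𝒲 : Set (Set (Euc d))) (hW : IsWhitneyDecomp Ξ 𝒲)
    (x y : Euc d) (hx : x ∈ Ξ) (hy : y ∈ Ξ)
    (hxy : dist x y ≤ (1 / (10 * Real.sqrt d)) *
      min (infDist x (frontier Ξ)) (infDist y (frontier Ξ))) :
    ∃ m : ℕ, 1 ≤ m ∧ m ≤ 4 ∧ ∃ Q : ℕ → Set (Euc d),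
      (∀ i < m, Q i ∈ 𝒲) ∧ x ∈ Q 0 ∧ y ∈ Q (m - 1) ∧
      ∀ i, i + 1 < m → (Q i ∩ Q (i + 1)).Nonempty :=
  exists_short_intersecting_chain_general Ξ 𝒲 hW x y hx hy hxy
end
end

section
/- Let Ω ⊆ ℝ^d be open, D ⊆ ∂Ω closed, Γ := ∂Ω \ D, and suppose there exist ε ∈ (0,1] and δ ∈ (0,∞] such that for all x, y ∈ Ω with |x − y| < δ there is a rectifiable curve γ joining x and y in ℝ^d \ Γ̄ with length(γ) ≤ ε^{-1}|x − y| and dist(z, Γ) ≥ ε |x − z||y − z|/|x − y| for all z ∈ γ. Then Γ has Lebesgue measure zero. -/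
open Set Metric MeasureTheory ENNReal NNReal

noncomputable section

/-- A rectifiable curve joining `x` and `y` in `ℝ^d \ Γ̄` satisfying the length condition (LC)
`length(γ) ≤ ε⁻¹ |x - y|` and the carrot (cigar) condition (CC)
`dist(z, Γ) ≥ ε |x - z| |y - z| / |x - y|` for all `z ∈ γ`. -/
def CarrotPath {d : ℕ} (Γ : Set (Euc d)) (ε : ℝ) (x y : Euc d) (γ : ℝ → Euc d) : Prop :=
  ContinuousOn γ (Icc 0 1) ∧ γ 0 = x ∧ γ 1 = y ∧
  MapsTo γ (Icc 0 1) (closure Γ)ᶜ ∧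
  eVariationOn γ (Icc 0 1) ≤ ENNReal.ofReal (ε⁻¹ * dist x y) ∧
  ∀ t ∈ Icc (0:ℝ) 1,
    ENNReal.ofReal (ε * (dist x (γ t) * dist y (γ t)) / dist x y) ≤
      EMetric.infEdist (γ t) Γ

/-- Porosity: near every point of `Γ = ∂Ω \ D`, at every sufficiently small scale `s`, there
is a ball of radius `ε s / 8` inside `closedBall x₀ s` that misses `Γ`. -/
lemma neumann_boundary_porous {d : ℕ} (Ω : Set (Euc d)) (hΩ : IsOpen Ω)
    (D : Set (Euc d))
    (ε : ℝ) (hε : 0 < ε) (hε1 : ε ≤ 1) (δ : ℝ≥0∞) (hδ : 0 < δ)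
    (hpath : ∀ x ∈ Ω, ∀ y ∈ Ω, edist x y < δ →
      ∃ γ : ℝ → Euc d, CarrotPath (frontier Ω \ D) ε x y γ) :
    ∀ x₀ ∈ frontier Ω \ D, ∃ b > (0:ℝ), ∀ s : ℝ, 0 < s → s ≤ b →
      ∃ z : Euc d, ball z (ε * s / 8) ⊆ closedBall x₀ s ∧
        Disjoint (ball z (ε * s / 8)) (frontier Ω \ D) := by
  intro x₀ hx₀
  -- a real number below δ
  obtain ⟨c, hc0, hcδ⟩ := exists_between hδ
  have hctop : c ≠ ⊤ := ne_top_of_lt hcδ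
  set r : ℝ := c.toReal with hr
  have hr0 : 0 < r := ENNReal.toReal_pos hc0.ne' hctop
  have hrδ : ENNReal.ofReal r < δ := by
    rwa [hr, ENNReal.ofReal_toReal hctop]
  -- x₀ is on the closure of Ω but not in Ω
  have hx₀cl : x₀ ∈ closure Ω := frontier_subset_closure hx₀.1
  have hx₀notΩ : x₀ ∉ Ω := by
    intro h
    have := hx₀.1.2
    rw [hΩ.interior_eq] at this
    exact this h
  -- fix y ∈ Ω close to x₀
  obtain ⟨y, hyΩ, hyd⟩ := Metric.mem_closure_iff.1 hx₀cl (r / 2) (by positivity)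
  have hy0 : 0 < dist y x₀ := by
    rw [dist_pos]; intro h; exact hx₀notΩ (h ▸ hyΩ)
  set d₀ : ℝ := dist y x₀ with hd₀
  have hd₀r : d₀ < r / 2 := by rwa [hd₀, dist_comm]
  refine ⟨d₀, hy0, fun s hs0 hsb => ?_⟩
  -- pick x ∈ Ω very close to x₀
  obtain ⟨x, hxΩ, hxd⟩ := Metric.mem_closure_iff.1 hx₀cl (min (s / 4) (d₀ / 2))
    (lt_min (by positivity) (by positivity))
  have hxd1 : dist x₀ x < s / 4 := lt_of_lt_of_le hxd (min_le_left _ _)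
  have hxd2 : dist x₀ x < d₀ / 2 := lt_of_lt_of_le hxd (min_le_right _ _)
  -- bounds on dist x y
  have hxy_lb : d₀ / 2 ≤ dist x y := by
    have h1 : d₀ ≤ dist y x + dist x x₀ := dist_triangle y x x₀
    rw [dist_comm y x, dist_comm x x₀] at h1
    linarith
  have hxy_ub : dist x y < r := by
    have h1 : dist x y ≤ dist x x₀ + dist x₀ y := dist_triangle x x₀ y
    rw [dist_comm x x₀, dist_comm x₀ y] at h1
    linarith
  have hxy0 : 0 < dist x y := lt_of_lt_of_le (by positivity) hxy_lb
  have hedist : edist x y < δ := by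
    rw [edist_dist]
    exact lt_trans (ENNReal.ofReal_lt_ofReal_iff hr0 |>.2 hxy_ub) hrδ
  obtain ⟨γ, hcont, h0, h1, _, _, hcc⟩ := hpath x hxΩ y hyΩ hedist
  -- find the point z on the curve at distance s/4 from x
  have hf : ContinuousOn (fun t => dist x (γ t)) (Icc (0:ℝ) 1) :=
    (continuous_const.dist continuous_id).comp_continuousOn hcont
  have hmem : s / 4 ∈ Icc (dist x (γ 0)) (dist x (γ 1)) := by
    rw [h0, h1, dist_self]
    constructor
    · positivity
    · linarith
  obtain ⟨t, ht, hft⟩ := intermediate_value_Icc zero_le_one hf hmem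
  set z : Euc d := γ t with hz
  have hxz : dist x z = s / 4 := hft
  have hyz : dist x y / 2 ≤ dist y z := by
    have h2 : dist x y ≤ dist x z + dist z y := dist_triangle x z y
    rw [dist_comm z y] at h2
    have hs4 : s / 4 ≤ dist x y / 2 := by linarith
    linarith
  -- carrot condition gives a lower bound on the distance from z to Γ
  have hkey : ENNReal.ofReal (ε * s / 8) ≤ EMetric.infEdist z (frontier Ω \ D) := by
    refine le_trans (ENNReal.ofReal_le_ofReal ?_) (hcc t ht)
    rw [hxz]
    rw [le_div_iff₀ hxy0]
    nlinarith [mul_le_mul_of_nonneg_left hyz (by positivity : (0:ℝ) ≤ ε * (s / 4))]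
  have hzx₀ : dist z x₀ ≤ s / 2 := by
    have h3 : dist z x₀ ≤ dist z x + dist x x₀ := dist_triangle z x x₀
    rw [dist_comm z x, dist_comm x x₀] at h3
    linarith
  refine ⟨z, ?_, ?_⟩
  · intro w hw
    rw [mem_ball] at hw
    rw [mem_closedBall]
    have h4 : dist w x₀ ≤ dist w z + dist z x₀ := dist_triangle w z x₀
    have h4' : ε * s ≤ 1 * s := mul_le_mul_of_nonneg_right hε1 hs0.le
    linarith
  · rw [disjoint_left]
    intro w hw hwΓ
    rw [mem_ball] at hw
    have h5 : EMetric.infEdist z (frontier Ω \ D) ≤ edist z w :=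
      EMetric.infEdist_le_edist_of_mem hwΓ
    have h6 : ENNReal.ofReal (ε * s / 8) ≤ ENNReal.ofReal (dist z w) := by
      rw [← edist_dist]
      exact le_trans hkey h5
    rw [ENNReal.ofReal_le_ofReal_iff dist_nonneg] at h6
    rw [dist_comm w z] at hw
    linarith

/-- If `Ω ⊆ ℝ^d` is open, `D ⊆ ∂Ω` is closed, `Γ := ∂Ω \ D`, and any two points of `Ω` at
distance `< δ` can be connected by a rectifiable curve in `ℝ^d \ Γ̄` satisfying the length
condition (LC) and the carrot condition (CC) with parameter `ε ∈ (0,1]`, then `Γ` has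
Lebesgue measure zero. -/
theorem measure_neumann_boundary_eq_zero {d : ℕ} (Ω : Set (Euc d)) (hΩ : IsOpen Ω)
    (D : Set (Euc d)) (hD : IsClosed D) (hDsub : D ⊆ frontier Ω)
    (ε : ℝ) (hε : 0 < ε) (hε1 : ε ≤ 1) (δ : ℝ≥0∞) (hδ : 0 < δ)
    (hpath : ∀ x ∈ Ω, ∀ y ∈ Ω, edist x y < δ →
      ∃ γ : ℝ → Euc d, CarrotPath (frontier Ω \ D) ε x y γ) :
    volume (frontier Ω \ D) = 0 := by
  rcases subsingleton_or_nontrivial (Euc d) with hss | hnt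
  · -- trivial case: the space is a point, frontier is empty
    have hfr : frontier Ω = ∅ := by
      rcases Ω.eq_empty_or_nonempty with rfl | hne
      · simp
      · have : Ω = univ := eq_univ_of_forall fun w => by
          obtain ⟨v, hv⟩ := hne
          rwa [Subsingleton.elim w v]
        rw [this, frontier_univ]
    rw [hfr, empty_diff, measure_empty]
  by_contra hvol
  set Γ : Set (Euc d) := frontier Ω \ D with hΓdef
  have hΓmeas : MeasurableSet Γ :=
    isClosed_frontier.measurableSet.diff hD.measurableSet
  -- the porosity constant
  set c : ℝ≥0∞ := ENNReal.ofReal ((ε / 8) ^ d) with hc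
  have hc0 : c ≠ 0 := by
    rw [hc, ← ENNReal.ofReal_zero, Ne, ENNReal.ofReal_eq_ofReal_iff (by positivity) le_rfl]
    positivity
  have h1c : 1 - c < 1 := ENNReal.sub_lt_self one_ne_top one_ne_zero hc0
  -- a density point of Γ
  have hae := Besicovitch.ae_tendsto_measure_inter_div (volume : Measure (Euc d)) Γ
  have haeΓ : ∀ᵐ x ∂(volume : Measure (Euc d)).restrict Γ, x ∈ Γ := ae_restrict_mem hΓmeas
  have hres : (volume : Measure (Euc d)).restrict Γ ≠ 0 := by
    intro h
    apply hvol
    have := congrArg (fun μ : Measure (Euc d) => μ univ) h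
    simpa [Measure.restrict_apply_univ] using this
  haveI : (ae ((volume : Measure (Euc d)).restrict Γ)).NeBot := ae_neBot.2 hres
  obtain ⟨x₀, htend, hx₀Γ⟩ := (hae.and haeΓ).exists
  -- porosity at x₀
  obtain ⟨b, hb, hpor⟩ :=
    neumann_boundary_porous Ω hΩ D ε hε hε1 δ hδ hpath x₀ hx₀Γ
  -- density ratio bound at small scales
  have hfinrank : Module.finrank ℝ (Euc d) = d := finrank_euclideanSpace_fin
  have hratio : ∀ s : ℝ, 0 < s → s ≤ b →
      volume (Γ ∩ closedBall x₀ s) / volume (closedBall x₀ s) ≤ 1 - c := by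
    intro s hs hsb
    obtain ⟨z, hsub, hdisj⟩ := hpor s hs hsb
    set A := volume (closedBall x₀ s) with hA
    set B := volume (ball z (ε * s / 8)) with hB
    have hA0 : A ≠ 0 := (measure_closedBall_pos volume x₀ hs).ne'
    have hAtop : A ≠ ⊤ := measure_closedBall_lt_top.ne
    have hBA : B = c * A := by
      rw [hB, hA, Measure.addHaar_ball volume z (by positivity),
        Measure.addHaar_closedBall volume x₀ hs.le, hfinrank, hc, ← mul_assoc,
        ← ENNReal.ofReal_mul (by positivity)]
      congr 2
      rw [← mul_pow]
      ring_nf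
    have hdisj' : Disjoint (Γ ∩ closedBall x₀ s) (ball z (ε * s / 8)) :=
      (hdisj.symm.mono_left inter_subset_left)
    have hsum : volume (Γ ∩ closedBall x₀ s) + B ≤ A := by
      rw [hB, hA, ← measure_union hdisj' measurableSet_ball]
      exact measure_mono (union_subset inter_subset_right hsub)
    have hle : volume (Γ ∩ closedBall x₀ s) ≤ (1 - c) * A := by
      have h7 : volume (Γ ∩ closedBall x₀ s) ≤ A - B := ENNReal.le_sub_of_add_le_right
        (by rw [hBA]; exact ENNReal.mul_ne_top ENNReal.ofReal_ne_top hAtop) hsum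
      have h8 : A - B = (1 - c) * A := by
        rw [hBA, ENNReal.sub_mul (fun _ _ => hAtop), one_mul]
      rwa [h8] at h7
    rw [ENNReal.div_le_iff hA0 hAtop]
    exact hle
  have hev : ∀ᶠ s in nhdsWithin (0:ℝ) (Ioi 0),
      volume (Γ ∩ closedBall x₀ s) / volume (closedBall x₀ s) ≤ 1 - c := by
    filter_upwards [Ioc_mem_nhdsGT hb] with s hs
    exact hratio s hs.1 hs.2
  have : (1 : ℝ≥0∞) ≤ 1 - c := le_of_tendsto htend hev
  exact absurd this h1c.not_ge
end
end

section
/- Let Ω ⊆ ℝ^d be open and D ⊆ ∂Ω closed, and suppose the (ε,δ)-path condition of Assumption (curves in ℝ^d \ Γ̄ with the length and carrot conditions) holds with Γ := ∂Ω \ D. If f : Ω̄ → ℝ is Lipschitz with f = 0 on D, then the zero extension E₀f of f to any open superset Ω_Γ ⊇ Ω with Γ ⊆ ∂Ω_Γ (extending by 0 on Ω_Γ \ Ω) satisfies |E₀f(x) − E₀f(y)| ≤ (Lip_Ω(f)/ε)|x − y| whenever x ∈ Ω, y ∈ Ω_Γ \ Ω, and |x − y| < δ. Here the key point is that any admissible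 curve from x to y must cross D, not Γ. -/
open Set Metric MeasureTheory ENNReal NNReal

noncomputable section

/-- Lipschitz estimate for the zero extension across the Dirichlet part: let `Ω ⊆ Ω_Γ` be
open sets, `D ⊆ ∂Ω` closed, `Γ := ∂Ω \ D ⊆ ∂Ω_Γ`, and suppose any `x ∈ Ω`, `y ∈ Ω_Γ` with
`|x − y| < δ` are joined by a curve in `ℝ^d \ Γ̄` satisfying the length and carrot
conditions with parameter `ε`. If `f` is Lipschitz on `Ω̄` (with constant `L`) and vanishes
on `D`, then the zero extension `E₀f` (equal to `f` on `Ω` and `0` outside) satisfies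
`|E₀f(x) − E₀f(y)| ≤ (L/ε) |x − y|` for `x ∈ Ω`, `y ∈ Ω_Γ \ Ω`, `|x − y| < δ`. -/
theorem zero_extension_lipschitz_estimate {d : ℕ} (Ω ΩΓ : Set (Euc d))
    (hΩ : IsOpen Ω) (hΩΓ : IsOpen ΩΓ) (hsub : Ω ⊆ ΩΓ)
    (D : Set (Euc d)) (hD : IsClosed D) (hDsub : D ⊆ frontier Ω)
    (hΓsub : frontier Ω \ D ⊆ frontier ΩΓ)
    (ε : ℝ) (hε : 0 < ε) (hε1 : ε ≤ 1) (δ : ℝ≥0∞)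
    (hpath : ∀ x ∈ Ω, ∀ y ∈ ΩΓ, edist x y < δ →
      ∃ γ : ℝ → Euc d, CarrotPath (frontier Ω \ D) ε x y γ)
    (f : Euc d → ℝ) (L : ℝ≥0) (hf : LipschitzOnWith L f (closure Ω))
    (hfD : ∀ x ∈ D, f x = 0) :
    ∀ x ∈ Ω, ∀ y ∈ ΩΓ \ Ω, edist x y < δ →
      |Ω.indicator f x - Ω.indicator f y| ≤
        (L / ε) * dist x y := by
  intro x hx y hy hxy
  obtain ⟨γ, hcont, h0, h1, hmaps, hvar, _⟩ := hpath x hx y (hy.1) hxy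
  -- find t ∈ [0,1] with γ t ∈ frontier Ω
  have himg : IsPreconnected (γ '' Icc 0 1) :=
    (isPreconnected_Icc).image γ hcont
  have hexist : ∃ t ∈ Icc (0:ℝ) 1, γ t ∈ frontier Ω := by
    by_contra hcon
    push_neg at hcon
    have hsubuv : γ '' Icc 0 1 ⊆ Ω ∪ (closure Ω)ᶜ := by
      rintro _ ⟨t, ht, rfl⟩
      have := hcon t ht
      by_cases hmem : γ t ∈ Ω
      · exact Or.inl hmem
      · refine Or.inr fun hc => this ⟨hc, ?_⟩
        rwa [hΩ.interior_eq]
    have h1' : (γ '' Icc 0 1 ∩ Ω).Nonempty :=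
      ⟨x, ⟨0, by simp, h0⟩, hx⟩
    have h2' : (γ '' Icc 0 1 ∩ (closure Ω)ᶜ).Nonempty := by
      refine ⟨y, ⟨1, by simp, h1⟩, fun hc => ?_⟩
      have hyf : y ∈ frontier Ω := ⟨hc, by rw [hΩ.interior_eq]; exact hy.2⟩
      by_cases hyD : y ∈ D
      · exact hcon 1 ⟨one_pos.le, le_refl 1⟩ (h1.symm ▸ hyf)
      · have := hmaps (show (1:ℝ) ∈ Icc (0:ℝ) 1 from ⟨one_pos.le, le_refl 1⟩)
        rw [h1] at this
        exact this (subset_closure ⟨hyf, hyD⟩)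
    obtain ⟨z, hz⟩ := himg Ω (closure Ω)ᶜ hΩ isClosed_closure.isOpen_compl hsubuv h1' h2'
    exact hz.2.2 (subset_closure hz.2.1)
  obtain ⟨t, ht, htf⟩ := hexist
  have hzD : γ t ∈ D := by
    by_contra hzD
    exact hmaps ht (subset_closure ⟨htf, hzD⟩)
  have hfz : f (γ t) = 0 := hfD _ hzD
  -- distance bound : dist x (γ t) ≤ ε⁻¹ * dist x y
  have hxy0 : (0:ℝ) ≤ ε⁻¹ * dist x y := by positivity
  have hdist : dist x (γ t) ≤ ε⁻¹ * dist x y := by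
    have h01 : (0:ℝ) ∈ Icc (0:ℝ) 1 := by simp
    have := (eVariationOn.edist_le γ h01 ht).trans hvar
    rw [h0, edist_dist] at this
    exact (ENNReal.ofReal_le_ofReal_iff hxy0).1 this
  -- Lipschitz bound
  have hxcl : x ∈ closure Ω := subset_closure hx
  have hzcl : γ t ∈ closure Ω := frontier_subset_closure htf
  have hlip : |f x - f (γ t)| ≤ (L : ℝ) * dist x (γ t) := by
    have := hf.dist_le_mul x hxcl (γ t) hzcl
    rwa [Real.dist_eq] at this
  have hfx : |f x| ≤ (L : ℝ) * (ε⁻¹ * dist x y) := by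
    calc |f x| = |f x - f (γ t)| := by rw [hfz, sub_zero]
    _ ≤ (L : ℝ) * dist x (γ t) := hlip
    _ ≤ (L : ℝ) * (ε⁻¹ * dist x y) := by
        exact mul_le_mul_of_nonneg_left hdist L.coe_nonneg
  rw [Set.indicator_of_mem hx, Set.indicator_of_notMem hy.2, sub_zero]
  calc |f x| ≤ (L : ℝ) * (ε⁻¹ * dist x y) := hfx
  _ = (L / ε) * dist x y := by ring
end
end

section
/- Let Ω ⊆ ℝ^d be open with Ω̄ ≠ ℝ^d, D ⊆ ∂Ω closed, Γ := ∂Ω \ D nonempty, and suppose the (ε,δ,K,λ)-conditions of Assumption hold: for x,y ∈ Ω with |x−y| < δ there is a curve γ in Ξ := ℝ^d \ Γ̄ with length(γ) ≤ ε^{-1}|x−y|, dist(z,Γ) ≥ ε|x−z||y−z|/|x−y| on γ, and qhd_Ξ(z, Ω) ≤ K on γ; components of Ω meeting Γ have diameter ≥ λδ. For Q ∈ 𝒲_e (exterior Whitney cubes of Ω̄ with diam(Q) ≤ Aδ and dist(Q,Γ) < B dist(Q, ∂Ω\Γ)), there exists a connected component Ω_m of Ω with ∂Ω_m ∩ Γ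 ≠ ∅ and a point x ∈ Ω_m with dist(x, Q) ≤ 5B diam(Q). -/
open Set Metric MeasureTheory ENNReal NNReal

noncomputable section

/-- A rectifiable curve in `Ξ` joining `x` to `y`, parametrized over `[0,1]`. -/
def IsRectCurve {d : ℕ} (Ξ : Set (Euc d)) (x y : Euc d) (γ : ℝ → Euc d) : Prop :=
  ContinuousOn γ (Icc 0 1) ∧ γ 0 = x ∧ γ 1 = y ∧ MapsTo γ (Icc 0 1) Ξ ∧
    eVariationOn γ (Icc 0 1) < ⊤

/-- The quasihyperbolic distance of `x, y` in `Ξ`: the infimum over rectifiable curves in `Ξ`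
joining `x` and `y` of `∫_γ dist(z, ∂Ξ)⁻¹ |dz|`.  The infimum over the empty set is `∞`,
and (real) division by `dist(z, ∅) = 0` realizes the convention `1/∞ = 0` for `∂Ξ = ∅`. -/
noncomputable def qhd {d : ℕ} (Ξ : Set (Euc d)) (x y : Euc d) : ℝ≥0∞ :=
  ⨅ (γ : ℝ → Euc d) (_ : IsRectCurve Ξ x y γ),
    ∫⁻ t in Icc (0:ℝ) 1,
      ENNReal.ofReal (‖derivWithin γ (Icc 0 1) t‖ / infDist (γ t) (frontier Ξ))

/-- Quasihyperbolic distance from a point to a set. -/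
noncomputable def qhdSet {d : ℕ} (Ξ : Set (Euc d)) (x : Euc d) (S : Set (Euc d)) : ℝ≥0∞ :=
  ⨅ y ∈ S, qhd Ξ x y

/-- Assumption 2.2 of the paper: with `Γ := ∂Ω \ D` and `Ξ := ℝ^d \ Γ̄`, any two points of `Ω`
at distance `< δ` can be joined by a rectifiable curve in `Ξ` satisfying the length condition
(LC), the carrot condition (CC) and the quasihyperbolic distance condition (QHD)
`qhd_Ξ(z, Ω) ≤ K`; moreover every connected component of `Ω` whose boundary meets `Γ`
has diameter at least `λ δ` (DC). -/
def EpsDeltaAssumption {d : ℕ} (Ω D : Set (Euc d)) (ε : ℝ) (δ : ℝ≥0∞) (K lam : ℝ) : Prop :=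
  (∀ x ∈ Ω, ∀ y ∈ Ω, edist x y < δ →
    ∃ γ : ℝ → Euc d, CarrotPath (frontier Ω \ D) ε x y γ ∧
      ∀ t ∈ Icc (0:ℝ) 1,
        qhdSet (closure (frontier Ω \ D))ᶜ (γ t) Ω ≤ ENNReal.ofReal K) ∧
  (∀ x ∈ Ω, (frontier (connectedComponentIn Ω x) ∩ (frontier Ω \ D)).Nonempty →
      ENNReal.ofReal lam * δ ≤ EMetric.diam (connectedComponentIn Ω x))

/-! The exterior cube `Q` lies at distance `≤ 4 diam Q` from `∂Ω` (a segment from `Q` to `Ω̄`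
crosses `∂Ω`), hence, by the defining inequality of `𝒲_e` and `B ≥ 1`, at distance
`≤ 4 B diam Q` from `Γ = ∂Ω \ D`: pick `y ∈ Γ` with `dist(y, Q) < (9/2) B diam Q`. Since `D` is
closed, a ball around `y` misses `D`; take `x ∈ Ω` in that ball. The segment from `x` to `y ∉ Ω`
leaves the component of `Ω` containing `x` at a point of its frontier, which lies in `∂Ω` and in
the ball, hence in `Γ`. -/

section Topology

variable {X : Type*} [TopologicalSpace X]

theorem IsPreconnected.inter_frontier_nonempty {s t : Set X} (hs : IsPreconnected s)
    (hst : (s ∩ t).Nonempty) (hst' : (s \ t).Nonempty) : (s ∩ frontier t).Nonempty := by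
  by_contra h
  have hcover : s ⊆ interior t ∪ (closure t)ᶜ := fun z hz =>
    (em (z ∈ closure t)).imp (fun hzt => by_contra fun hzi => h ⟨z, hz, hzt, hzi⟩) id
  rcases hs.subset_or_subset isOpen_interior isClosed_closure.isOpen_compl
      (disjoint_compl_right_iff_subset.2 interior_subset_closure) hcover with hsub | hsub
  · obtain ⟨y, hys, hyt⟩ := hst'
    exact hyt (interior_subset (hsub hys))
  · obtain ⟨x, hxs, hxt⟩ := hst
    exact hsub hxs (subset_closure hxt)

theorem IsOpen.frontier_connectedComponentIn_subset [LocallyConnectedSpace X] {Ω : Set X}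
    (hΩ : IsOpen Ω) (x : X) :
    frontier (connectedComponentIn Ω x) ⊆ frontier Ω := by
  intro z hz
  rw [hΩ.connectedComponentIn.frontier_eq] at hz
  rw [hΩ.frontier_eq]
  refine ⟨closure_mono (connectedComponentIn_subset Ω x) hz.1, fun hzΩ => hz.2 ?_⟩
  -- the open component of `z` meets that of `x`, since `z` is in the closure of the latter
  obtain ⟨w, hwz, hwx⟩ :=
    _root_.mem_closure_iff.1 hz.1 _ hΩ.connectedComponentIn (mem_connectedComponentIn hzΩ)
  rw [connectedComponentIn_eq hwx, ← connectedComponentIn_eq hwz]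
  exact mem_connectedComponentIn hzΩ

end Topology

section SetEDist

variable {α : Type*} [PseudoEMetricSpace α] {A B C : Set α}

theorem setEDist_def : setEDist A B = ⨅ a ∈ A, infEDist a B := rfl

theorem setEDist_lt_iff {r : ℝ≥0∞} : setEDist A B < r ↔ ∃ a ∈ A, ∃ b ∈ B, edist a b < r := by
  simp only [setEDist_def, iInf_lt_iff, infEDist_lt_iff, exists_prop]

theorem setEDist_union : setEDist A (B ∪ C) = min (setEDist A B) (setEDist A C) := by
  simp only [setEDist_def, infEDist_union, iInf_inf_eq]

end SetEDist

theorem setEDist_ne_top {α : Type*} [PseudoMetricSpace α] {A B : Set α} (hA : A.Nonempty)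
    (hB : B.Nonempty) : setEDist A B ≠ ⊤ :=
  ne_top_of_le_ne_top (infEDist_ne_top hB) (iInf₂_le hA.some hA.some_mem)

section NormedSpace

variable {E : Type*} [SeminormedAddCommGroup E] [NormedSpace ℝ E]

theorem exists_mem_frontier_dist_le {s : Set E} {x y : E} (hx : x ∈ s) (hy : y ∉ s) :
    ∃ z ∈ frontier s, dist z y ≤ dist x y := by
  obtain ⟨z, hzxy, hzs⟩ := (convex_segment x y).isPreconnected.inter_frontier_nonempty
    ⟨x, left_mem_segment ℝ x y, hx⟩ ⟨y, right_mem_segment ℝ x y, hy⟩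
  exact ⟨z, hzs, segment_subset_closedBall_right x y hzxy⟩

theorem infEDist_frontier_le {s : Set E} {x : E} (hx : x ∉ s) :
    infEDist x (frontier s) ≤ infEDist x s :=
  le_infEDist.2 fun y hy => by
    obtain ⟨z, hzs, hzx⟩ := exists_mem_frontier_dist_le hy hx
    calc infEDist x (frontier s) ≤ edist x z := infEDist_le_edist_of_mem hzs
      _ ≤ edist x y := by
        simpa only [edist_dist, dist_comm x] using ENNReal.ofReal_le_ofReal hzx

theorem setEDist_frontier_le_closure {A s : Set E} (hA : A ⊆ (closure s)ᶜ) :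
    setEDist A (frontier s) ≤ setEDist A (closure s) :=
  iInf₂_mono fun _ ha =>
    (infEDist_anti frontier_closure_subset).trans (infEDist_frontier_le (hA ha))

theorem exists_near_frontier_connectedComponentIn_meets_diff {Ω D : Set E} {y : E}
    (hΩ : IsOpen Ω) (hD : IsClosed D) (hy : y ∈ frontier Ω \ D) {η : ℝ} (hη : 0 < η) :
    ∃ x ∈ Ω, dist x y < η ∧
      (frontier (connectedComponentIn Ω x) ∩ (frontier Ω \ D)).Nonempty := by
  obtain ⟨r, hr, hrD⟩ := Metric.isOpen_iff.1 hD.isOpen_compl y hy.2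
  obtain ⟨x, hxΩ, hyx⟩ :=
    Metric.mem_closure_iff.1 (frontier_subset_closure hy.1) _ (lt_min hr hη)
  rw [dist_comm] at hyx
  have hyC : y ∉ connectedComponentIn Ω x := fun hyC =>
    (hΩ.frontier_eq ▸ hy.1).2 (connectedComponentIn_subset Ω x hyC)
  obtain ⟨z, hzC, hzy⟩ := exists_mem_frontier_dist_le (mem_connectedComponentIn hxΩ) hyC
  refine ⟨x, hxΩ, hyx.trans_le (min_le_right _ _), z, hzC,
    hΩ.frontier_connectedComponentIn_subset x hzC, hrD ?_⟩
  exact mem_ball.2 (hzy.trans_lt (hyx.trans_le (min_le_left _ _)))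

end NormedSpace

theorem le_mul_min_of_lt_mul {M : Type*} [MulOneClass M] [LinearOrder M] [MulRightMono M]
    {a b c : M} (h : a < c * b) (hc : 1 ≤ c) : a ≤ c * min a b := by
  rcases min_choice a b with hab | hab <;> rw [hab]
  exacts [le_mul_of_one_le_left' hc, h.le]

theorem IsDyadicCube.isCompact {d : ℕ} {Q : Set (Euc d)} (hQ : IsDyadicCube Q) :
    IsCompact Q := by
  obtain ⟨k, m, rfl⟩ := hQ
  convert (PiLp.homeomorph 2 fun _ : Fin d => ℝ).isCompact_preimage.2
    (isCompact_Icc (a := fun i => (m i : ℝ) * 2 ^ (-k))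
      (b := fun i => ((m i : ℝ) + 1) * 2 ^ (-k)))
  ext x
  simp only [mem_setOf_eq, mem_preimage, mem_Icc, Pi.le_def, forall_and]
  rfl

theorem IsDyadicCube.diam_pos {d : ℕ} (hd : 0 < d) {Q : Set (Euc d)} (hQ : IsDyadicCube Q) :
    0 < diam Q := by
  refine Metric.diam_pos ?_ hQ.isCompact.isBounded
  obtain ⟨k, m, rfl⟩ := hQ
  have ht : (0 : ℝ) < 2 ^ (-k) := by positivity
  refine ⟨WithLp.toLp 2 fun i => (m i : ℝ) * 2 ^ (-k), fun i => ⟨?_, ?_⟩,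
    WithLp.toLp 2 fun i => ((m i : ℝ) + 1) * 2 ^ (-k), fun i => ⟨?_, ?_⟩, fun h => ?_⟩
  · exact le_rfl
  · exact mul_le_mul_of_nonneg_right (by linarith) ht.le
  · exact mul_le_mul_of_nonneg_right (by linarith) ht.le
  · exact le_rfl
  · have h₀ : (m ⟨0, hd⟩ : ℝ) * 2 ^ (-k) = ((m ⟨0, hd⟩ : ℝ) + 1) * 2 ^ (-k) :=
      congrArg (· ⟨0, hd⟩) h
    linarith

theorem point_in_neumann_component_general {d : ℕ} (hd : 0 < d) (Ω : Set (Euc d))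
    (hΩ : IsOpen Ω) (hΩne : Ω.Nonempty)
    (D : Set (Euc d)) (hD : IsClosed D) (hDsub : D ⊆ frontier Ω)
    (𝒲 : Set (Set (Euc d))) (hW : IsWhitneyDecomp (closure Ω)ᶜ 𝒲)
    (B : ℝ) (hB : 2 < B)
    (Q : Set (Euc d)) (hQ : Q ∈ 𝒲)
    (hQdist : setEDist Q (frontier Ω \ D) <
      ENNReal.ofReal B * setEDist Q (frontier Ω \ (frontier Ω \ D))) :
    ∃ x ∈ Ω, (frontier (connectedComponentIn Ω x) ∩ (frontier Ω \ D)).Nonempty ∧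
      infDist x Q ≤ 5 * B * Metric.diam Q := by
  have hdiam : 0 < diam Q := (hW.1 Q hQ).diam_pos hd
  have hQne : Q.Nonempty := nonempty_iff_ne_empty.2 fun h => by simp [h] at hdiam
  have hQΩ : setEDist Q (closure Ω) ≤ ENNReal.ofReal (4 * diam Q) := by
    have hWQ := (hW.2.2.2.1 Q hQ).2
    rw [compl_compl] at hWQ
    exact (ENNReal.le_ofReal_iff_toReal_le
      (setEDist_ne_top hQne hΩne.closure) (by positivity)).2 hWQ
  rw [diff_diff_cancel_left hDsub] at hQdist
  have hsplit :
      setEDist Q (frontier Ω) = min (setEDist Q (frontier Ω \ D)) (setEDist Q D) := by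
    rw [← setEDist_union, diff_union_of_subset hDsub]
  have hQΓ : setEDist Q (frontier Ω \ D) < ENNReal.ofReal (9 / 2 * B * diam Q) :=
    calc setEDist Q (frontier Ω \ D) ≤ ENNReal.ofReal B * setEDist Q (frontier Ω) := by
          rw [hsplit]
          exact le_mul_min_of_lt_mul hQdist (ENNReal.one_le_ofReal.2 (by linarith))
      _ ≤ ENNReal.ofReal B * ENNReal.ofReal (4 * diam Q) := by
          gcongr
          exact (setEDist_frontier_le_closure (hW.2.1 ▸ subset_sUnion_of_mem hQ)).trans hQΩ
      _ < ENNReal.ofReal (9 / 2 * B * diam Q) := by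
          rw [← ENNReal.ofReal_mul (by linarith), ENNReal.ofReal_lt_ofReal_iff (by positivity)]
          nlinarith
  obtain ⟨q, hqQ, y, hyΓ, hqy⟩ := setEDist_lt_iff.1 hQΓ
  obtain ⟨x, hxΩ, hxy, hxΓ⟩ :=
    exists_near_frontier_connectedComponentIn_meets_diff hΩ hD hyΓ
      (by positivity : 0 < B * diam Q / 2)
  refine ⟨x, hxΩ, hxΓ, ?_⟩
  calc infDist x Q ≤ dist x y + dist q y :=
        (infDist_le_dist_of_mem hqQ).trans (dist_triangle_right ..)
    _ ≤ 5 * B * Metric.diam Q := by linarith [edist_lt_ofReal.1 hqy]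

/-- Point in a Neumann component: under the `(ε, δ, K, λ)`-assumption, for every exterior
cube `Q ∈ 𝒲_e` (a Whitney cube of `ℝ^d \ Ω̄` with `diam Q ≤ Aδ` and
`dist(Q, Γ) < B dist(Q, ∂Ω \ Γ)`) there are a connected component `Ω_m` of `Ω` with
`∂Ω_m ∩ Γ ≠ ∅` and a point `x ∈ Ω_m` with `dist(x, Q) ≤ 5 B diam Q`. -/
theorem point_in_neumann_component {d : ℕ} (hd : 0 < d) (Ω : Set (Euc d))
    (hΩ : IsOpen Ω) (hΩne : Ω.Nonempty) (hncl : closure Ω ≠ univ)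
    (D : Set (Euc d)) (hD : IsClosed D) (hDsub : D ⊆ frontier Ω)
    (hΓne : (frontier Ω \ D).Nonempty)
    (ε : ℝ) (hε : 0 < ε) (hε1 : ε ≤ 1) (δ : ℝ≥0∞) (hδ : 0 < δ) (K lam : ℝ)
    (hass : EpsDeltaAssumption Ω D ε δ K lam)
    (𝒲 : Set (Set (Euc d))) (hW : IsWhitneyDecomp (closure Ω)ᶜ 𝒲)
    (A B : ℝ) (hA : 0 < A) (hB : 2 < B)
    (Q : Set (Euc d)) (hQ : Q ∈ 𝒲)
    (hQdiam : ENNReal.ofReal (Metric.diam Q) ≤ ENNReal.ofReal A * δ)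
    (hQdist : setEDist Q (frontier Ω \ D) <
      ENNReal.ofReal B * setEDist Q (frontier Ω \ (frontier Ω \ D))) :
    ∃ x ∈ Ω, (frontier (connectedComponentIn Ω x) ∩ (frontier Ω \ D)).Nonempty ∧
      infDist x Q ≤ 5 * B * Metric.diam Q :=
  point_in_neumann_component_general hd Ω hΩ hΩne D hD hDsub 𝒲 hW B hB Q hQ hQdist
end
end
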